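/- arXiv:0911.3347 — 9 statements merged into one kernel-verified Lean document; each statement's English description precedes it below -/
import Mathlib

section
/- Fix N ≥ 1, and let ∧^N : {0,1}^N × {0,1}^N → {0,1}^N denote componentwise Boolean AND. Then any partition of {0,1}^N × {0,1}^N into ∧^N-monochromatic rectangles has at least 3^N parts. -/
/-- Any partition of `{0,1}^N × {0,1}^N` into rectangles on which the
componentwise AND `∧^N` is constant has at least `3^N` parts. -/
theorem and_block_partition_lower_bound (N : ℕ) (hN : 1 ≤ N)
    {ι : Type*} [Fintype ι]
    (A B : ι → Set (Fin N → Bool))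
    (hdisj : ∀ i j, i ≠ j → Disjoint (A i ×ˢ B i) (A j ×ˢ B j))
    (hcover : ⋃ i, (A i ×ˢ B i) = Set.univ)
    (hmono : ∀ i, ∀ p ∈ A i ×ˢ B i, ∀ q ∈ A i ×ˢ B i,
      (fun k => p.1 k && p.2 k) = (fun k => q.1 k && q.2 k)) :
    3 ^ N ≤ Fintype.card ι := by
  classical
  have hmem : ∀ p : (Fin N → Bool) × (Fin N → Bool), ∃ i, p ∈ A i ×ˢ B i := by
    intro p
    have : p ∈ ⋃ i, A i ×ˢ B i := hcover ▸ Set.mem_univ p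
    exact Set.mem_iUnion.mp this
  let pt : (Fin N → {q : Bool × Bool // (q.1 || q.2) = true}) →
      (Fin N → Bool) × (Fin N → Bool) :=
    fun g => (fun k => (g k).1.1, fun k => (g k).1.2)
  let f : (Fin N → {q : Bool × Bool // (q.1 || q.2) = true}) → ι :=
    fun g => (hmem (pt g)).choose
  have hf : ∀ g, pt g ∈ A (f g) ×ˢ B (f g) := fun g => (hmem (pt g)).choose_spec
  have key : ∀ (a b a' b' : Bool), (a || b) = true → (a' || b') = true →
      (a && b) = (a' && b') → (a && b) = (a && b') → (a && b) = (a' && b) →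
      a = a' ∧ b = b' := by decide
  have hinj : Function.Injective f := by
    intro g g' h
    have m1 := hf g
    have m2 : pt g' ∈ A (f g) ×ˢ B (f g) := h ▸ hf g'
    have e1 := hmono (f g) (pt g) m1 (pt g') m2
    have e2 := hmono (f g) (pt g) m1 ((pt g).1, (pt g').2) ⟨m1.1, m2.2⟩
    have e3 := hmono (f g) (pt g) m1 ((pt g').1, (pt g).2) ⟨m2.1, m1.2⟩
    funext k
    have h1 := congrFun e1 k
    have h2 := congrFun e2 k
    have h3 := congrFun e3 k
    have hk := key (g k).1.1 (g k).1.2 (g' k).1.1 (g' k).1.2 (g k).2 (g' k).2 h1 h2 h3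
    exact Subtype.ext (Prod.ext hk.1 hk.2)
  calc 3 ^ N = Fintype.card (Fin N → {q : Bool × Bool // (q.1 || q.2) = true}) := by
        have : Fintype.card {q : Bool × Bool // (q.1 || q.2) = true} = 3 := by decide
        rw [Fintype.card_fun, this, Fintype.card_fin]
    _ ≤ Fintype.card ι := Fintype.card_le_of_injective f hinj
end

section
/- Fix n ≥ 2, N ≥ 1, and 1 ≤ θ ≤ n. A measurement matrix M is an element of ({0,1}^N)^n, viewed as an n × N Boolean matrix whose rows are the nodes' blocks; its j-th column is M^{(j)} ∈ {0,1}^n. Let E be the set of measurement matrices all of whose columns have Hamming weight θ−1 or θ. Then E is a multidimensional fooling set for the block threshold function Π_θ^N: for any two distinct matrices M₁, M₂ ∈ E with Π_θ^N(M₁) = Π_θ^N(M₂), there exists a row index i* such that replacing row i* of one matrix by row i* of the other yields a matrix M* with Π_θ^N(M*) ≠ Π_θ^N(M₁). -/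
/-- The Hamming weight of the `j`-th column of an `n × N` Boolean measurement matrix. -/
def colWeight {n N : ℕ} (M : Fin n → Fin N → Bool) (j : Fin N) : ℕ :=
  (Finset.univ.filter fun i => M i j = true).card

/-- The block threshold function `Π_θ^N`: its `j`-th coordinate is `1` iff the `j`-th
column of `M` has at least `θ` ones. -/
def blockThreshold {n N : ℕ} (θ : ℕ) (M : Fin n → Fin N → Bool) : Fin N → Bool :=
  fun j => decide (θ ≤ colWeight M j)

/-!
Since the admissible column weights `θ - 1` and `θ` lie on either side of the threshold, equal
block values force equal column weights. Pick an entry `(i, j)` where the two matrices differ,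
say `0` in `M₁` and `1` in `M₂`. If column `j` has weight `θ - 1`, giving `M₁` the row `i` of
`M₂` raises its weight to `θ`; if it has weight `θ`, giving `M₂` the row `i` of `M₁` lowers its
weight to `θ - 1`. Either way the threshold is crossed in column `j`.
-/

open Function

section
variable {n N : ℕ}

lemma colWeight_update (M : Fin n → Fin N → Bool) (i : Fin n) (r : Fin N → Bool) (j : Fin N) :
    colWeight (update M i r) j + (M i j).toNat = colWeight M j + (r j).toNat := by
  simp only [colWeight, Finset.card_filter, Fintype.sum_eq_add_sum_compl i, update_self]
  have hrest : ∀ k ∈ ({i}ᶜ : Finset (Fin n)),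
      (if update M i r k j = true then 1 else 0) = if M k j = true then 1 else 0 := by
    intro k hk
    rw [update_of_ne (by simpa using hk)]
  rw [Finset.sum_congr rfl hrest]
  cases M i j <;> cases r j <;> simp <;> omega

lemma blockThreshold_ne_of_not_iff {θ : ℕ} {M M' : Fin n → Fin N → Bool} (j : Fin N)
    (h : ¬(θ ≤ colWeight M j ↔ θ ≤ colWeight M' j)) :
    blockThreshold θ M ≠ blockThreshold θ M' := fun he =>
  h (by simpa [blockThreshold] using congrFun he j)

lemma colWeight_eq_of_blockThreshold_eq {θ : ℕ} {M₁ M₂ : Fin n → Fin N → Bool} {j : Fin N}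
    (h₁ : colWeight M₁ j = θ - 1 ∨ colWeight M₁ j = θ)
    (h₂ : colWeight M₂ j = θ - 1 ∨ colWeight M₂ j = θ)
    (heq : blockThreshold θ M₁ j = blockThreshold θ M₂ j) :
    colWeight M₁ j = colWeight M₂ j := by
  simp only [blockThreshold, decide_eq_decide] at heq
  omega

lemma blockThreshold_update_ne_or {θ : ℕ} {M₁ M₂ : Fin n → Fin N → Bool}
    {i : Fin n} {j : Fin N}
    (h₁ : colWeight M₁ j = θ - 1 ∨ colWeight M₁ j = θ)
    (h₂ : colWeight M₂ j = θ - 1 ∨ colWeight M₂ j = θ)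
    (heq : blockThreshold θ M₁ j = blockThreshold θ M₂ j)
    (hM₁ : M₁ i j = false) (hM₂ : M₂ i j = true) :
    blockThreshold θ (update M₁ i (M₂ i)) ≠ blockThreshold θ M₁ ∨
      blockThreshold θ (update M₂ i (M₁ i)) ≠ blockThreshold θ M₂ := by
  have hw := colWeight_eq_of_blockThreshold_eq h₁ h₂ heq
  have hup₁ := colWeight_update M₁ i (M₂ i) j
  have hup₂ := colWeight_update M₂ i (M₁ i) j
  rw [hM₁, hM₂, Bool.toNat_true, Bool.toNat_false] at hup₁ hup₂
  rcases h₁ with hθ | hθ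
  · exact .inl (blockThreshold_ne_of_not_iff j (by omega))
  · exact .inr (blockThreshold_ne_of_not_iff j (by omega))

end

theorem threshold_fooling_set_general (n N θ : ℕ)
    (M₁ M₂ : Fin n → Fin N → Bool)
    (h₁ : ∀ j, colWeight M₁ j = θ - 1 ∨ colWeight M₁ j = θ)
    (h₂ : ∀ j, colWeight M₂ j = θ - 1 ∨ colWeight M₂ j = θ)
    (hne : M₁ ≠ M₂)
    (heq : blockThreshold θ M₁ = blockThreshold θ M₂) :
    ∃ i : Fin n,
      blockThreshold θ (Function.update M₁ i (M₂ i)) ≠ blockThreshold θ M₁ ∨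
      blockThreshold θ (Function.update M₂ i (M₁ i)) ≠ blockThreshold θ M₁ := by
  obtain ⟨i, j, hij⟩ : ∃ i j, M₁ i j ≠ M₂ i j := by
    simpa [funext_iff] using hne
  refine ⟨i, ?_⟩
  cases hM₁ : M₁ i j
  · have hM₂ : M₂ i j = true := Bool.eq_true_of_not_eq_false (hM₁ ▸ hij.symm)
    have h := blockThreshold_update_ne_or (h₁ j) (h₂ j) (congrFun heq j) hM₁ hM₂
    rwa [← heq] at h
  · have hM₂ : M₂ i j = false := Bool.eq_false_of_not_eq_true (hM₁ ▸ hij.symm)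
    have h := blockThreshold_update_ne_or (h₂ j) (h₁ j) (congrFun heq j).symm hM₂ hM₁
    rw [← heq] at h
    exact h.symm

/-- The set of measurement matrices all of whose columns have Hamming weight
`θ−1` or `θ` is a multidimensional fooling set for the block threshold function `Π_θ^N`:
for distinct such matrices with equal block function values, replacing some row of one
matrix by the corresponding row of the other changes the block function value. -/
theorem threshold_fooling_set (n N θ : ℕ)
    (hn : 2 ≤ n) (hN : 1 ≤ N) (hθ1 : 1 ≤ θ) (hθn : θ ≤ n)
    (M₁ M₂ : Fin n → Fin N → Bool)
    (h₁ : ∀ j, colWeight M₁ j = θ - 1 ∨ colWeight M₁ j = θ)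
    (h₂ : ∀ j, colWeight M₂ j = θ - 1 ∨ colWeight M₂ j = θ)
    (hne : M₁ ≠ M₂)
    (heq : blockThreshold θ M₁ = blockThreshold θ M₂) :
    ∃ i : Fin n,
      blockThreshold θ (Function.update M₁ i (M₂ i)) ≠ blockThreshold θ M₁ ∨
      blockThreshold θ (Function.update M₂ i (M₁ i)) ≠ blockThreshold θ M₁ :=
  threshold_fooling_set_general n N θ M₁ M₂ h₁ h₂ hne heq
end

section
/- Fix n ≥ 2, N ≥ 1, and 1 ≤ θ ≤ n. Then any partition of the product space ({0,1}^N)^n into Π_θ^N-monochromatic boxes A₁ × ⋯ × Aₙ (with Aᵢ ⊆ {0,1}^N) has at least C(n+1,θ)^N parts. -/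
open Finset

theorem Finset.card_inter_lt_card_left_of_ne {α : Type*} [DecidableEq α] {s t : Finset α}
    (hne : s ≠ t) (hcard : #s = #t) : #(s ∩ t) < #s := by
  refine card_lt_card (ssubset_of_subset_of_ne inter_subset_left fun h => hne ?_)
  exact eq_of_subset_of_card_le (inter_eq_left.1 h) hcard.ge

theorem Finset.card_left_lt_card_union_of_ne {α : Type*} [DecidableEq α] {s t : Finset α}
    (hne : s ≠ t) (hcard : #s = #t) : #s < #(s ∪ t) := by
  refine card_lt_card (ssubset_of_subset_of_ne subset_union_left fun h => hne ?_)
  exact (eq_of_subset_of_card_le (union_eq_left.1 h.symm) hcard.le).symm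

theorem card_filter_card_add_one_eq_or_card_eq (n θ : ℕ) :
    #(univ.filter fun s : Finset (Fin n) => #s + 1 = θ ∨ #s = θ) = (n + 1).choose θ := by
  have hslice (k : ℕ) : univ.filter (fun s : Finset (Fin n) => #s = k) = powersetCard k univ := by
    ext s; simp
  cases θ with
  | zero => simp [filter_eq']
  | succ k =>
    simp only [Nat.add_right_cancel_iff]
    rw [filter_or, card_union_of_disjoint (disjoint_filter.2 fun s _ h h' => by omega), hslice,
      hslice, card_powersetCard, card_powersetCard, card_univ, Fintype.card_fin,
      Nat.choose_succ_succ', Nat.add_comm]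

section Fooling

variable {κ β : Type*} [DecidableEq κ] {X : κ → Type*}

def IsFoolingSet (F : (∀ r, X r) → β) (S : Finset (∀ r, X r)) : Prop :=
  ∀ x ∈ S, ∀ y ∈ S, x ≠ y → ∃ T : Finset κ, F (T.piecewise x y) ≠ F x

theorem IsFoolingSet.card_le_card {ι : Type*} [Fintype ι] {F : (∀ r, X r) → β}
    {S : Finset (∀ r, X r)} (hS : IsFoolingSet F S) (A : ι → ∀ r, Set (X r))
    (hcover : ⋃ i, {x : ∀ r, X r | ∀ r, x r ∈ A i r} = Set.univ)
    (hmono : ∀ i, ∀ x ∈ {x : ∀ r, X r | ∀ r, x r ∈ A i r},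
      ∀ y ∈ {x : ∀ r, X r | ∀ r, x r ∈ A i r}, F x = F y) :
    #S ≤ Fintype.card ι := by
  choose box hbox using Set.iUnion_eq_univ_iff.1 hcover
  refine card_le_card_of_injOn box (fun _ _ => mem_univ _) fun x hx y hy hxy => ?_
  by_contra hne
  obtain ⟨T, hT⟩ := hS x hx y hy hne
  refine hT (hmono (box x) _ (fun r => ?_) x (hbox x))
  exact T.piecewise_cases x y (· ∈ A (box x) r) (hbox x r) (hxy ▸ hbox y r)

end Fooling

section Threshold

variable {n N : ℕ}

def colSupport (M : Fin n → Fin N → Bool) (j : Fin N) : Finset (Fin n) :=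
  univ.filter fun i => M i j = true

@[simp]
theorem mem_colSupport {M : Fin n → Fin N → Bool} {i : Fin n} {j : Fin N} :
    i ∈ colSupport M j ↔ M i j = true := by simp [colSupport]

theorem colSupport_piecewise_colSupport_right (M M' : Fin n → Fin N → Bool) (j : Fin N) :
    colSupport ((colSupport M' j).piecewise M M') j = colSupport M j ∩ colSupport M' j := by
  ext i
  by_cases h : M' i j = true <;> simp [h]

theorem colSupport_piecewise_colSupport_left (M M' : Fin n → Fin N → Bool) (j : Fin N) :
    colSupport ((colSupport M j).piecewise M M') j = colSupport M j ∪ colSupport M' j := by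
  ext i
  by_cases h : M i j = true <;> simp [h]

theorem eq_of_colSupport_eq {M M' : Fin n → Fin N → Bool}
    (h : ∀ j, colSupport M j = colSupport M' j) : M = M' := by
  ext i j
  rw [Bool.eq_iff_iff, ← mem_colSupport, ← mem_colSupport, h j]

theorem blockThreshold_apply (θ : ℕ) (M : Fin n → Fin N → Bool) (j : Fin N) :
    blockThreshold θ M j = decide (θ ≤ #(colSupport M j)) := rfl

def thresholdFoolingSet (n N θ : ℕ) : Finset (Fin n → Fin N → Bool) :=
  univ.filter fun M => ∀ j, #(colSupport M j) + 1 = θ ∨ #(colSupport M j) = θ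

theorem card_filter_forall_colSupport (p : Finset (Fin n) → Prop) [DecidablePred p] :
    #(univ.filter fun M : Fin n → Fin N → Bool => ∀ j, p (colSupport M j))
      = #(univ.filter p) ^ N := by
  rw [← Fintype.card_piFinset_const]
  have hcol (s : Fin N → Finset (Fin n)) : colSupport (fun i j => decide (i ∈ s j)) = s := by
    ext; simp
  refine card_bij' (fun M _ => colSupport M) (fun s _ i j => decide (i ∈ s j))
    (fun M hM => by simpa using hM) (fun s hs => by simpa [hcol] using hs)
    (fun M _ => by ext; simp) (fun s _ => hcol s)

theorem card_thresholdFoolingSet (n N θ : ℕ) :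
    #(thresholdFoolingSet n N θ) = (n + 1).choose θ ^ N := by
  rw [← card_filter_card_add_one_eq_or_card_eq]
  exact card_filter_forall_colSupport (fun s => #s + 1 = θ ∨ #s = θ)

theorem isFoolingSet_thresholdFoolingSet (n N θ : ℕ) :
    IsFoolingSet (blockThreshold θ) (thresholdFoolingSet n N θ) := by
  intro M hM M' hM' hne
  obtain ⟨j, hj⟩ := not_forall.1 (mt eq_of_colSupport_eq hne)
  simp only [thresholdFoolingSet, mem_filter, mem_univ, true_and] at hM hM'
  have hw := hM j
  have hw' := hM' j
  suffices ∃ T : Finset (Fin n), blockThreshold θ (T.piecewise M M') j ≠ blockThreshold θ M j from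
    this.imp fun T hT h => hT (congrFun h j)
  simp only [blockThreshold_apply]
  by_cases hcard : #(colSupport M j) = #(colSupport M' j)
  · rcases hw with hw | hw
    · refine ⟨colSupport M j, ?_⟩
      have := card_left_lt_card_union_of_ne hj hcard
      rw [colSupport_piecewise_colSupport_left, ne_eq, decide_eq_decide]
      omega
    · refine ⟨colSupport M' j, ?_⟩
      have := card_inter_lt_card_left_of_ne hj hcard
      rw [colSupport_piecewise_colSupport_right, ne_eq, decide_eq_decide]
      omega
  · refine ⟨∅, ?_⟩
    rw [piecewise_empty, ne_eq, decide_eq_decide]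
    omega

end Threshold

theorem threshold_partition_lower_bound_general (n N θ : ℕ)
    {ι : Type*} [Fintype ι]
    (A : ι → Fin n → Set (Fin N → Bool))
    (hcover : ⋃ i, {M : Fin n → Fin N → Bool | ∀ r, M r ∈ A i r} = Set.univ)
    (hmono : ∀ i, ∀ M ∈ {M : Fin n → Fin N → Bool | ∀ r, M r ∈ A i r},
                  ∀ M' ∈ {M : Fin n → Fin N → Bool | ∀ r, M r ∈ A i r},
      blockThreshold θ M = blockThreshold θ M') :
    ((n + 1).choose θ) ^ N ≤ Fintype.card ι := by
  rw [← card_thresholdFoolingSet]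
  exact (isFoolingSet_thresholdFoolingSet n N θ).card_le_card A hcover hmono

/-- Any partition of `({0,1}^N)^n` into `Π_θ^N`-monochromatic boxes has
at least `C(n+1,θ)^N` parts. -/
theorem threshold_partition_lower_bound (n N θ : ℕ)
    (hn : 2 ≤ n) (hN : 1 ≤ N) (hθ1 : 1 ≤ θ) (hθn : θ ≤ n)
    {ι : Type*} [Fintype ι]
    (A : ι → Fin n → Set (Fin N → Bool))
    (hdisj : ∀ i j, i ≠ j →
      Disjoint {M : Fin n → Fin N → Bool | ∀ r, M r ∈ A i r}
               {M : Fin n → Fin N → Bool | ∀ r, M r ∈ A j r})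
    (hcover : ⋃ i, {M : Fin n → Fin N → Bool | ∀ r, M r ∈ A i r} = Set.univ)
    (hmono : ∀ i, ∀ M ∈ {M : Fin n → Fin N → Bool | ∀ r, M r ∈ A i r},
                  ∀ M' ∈ {M : Fin n → Fin N → Bool | ∀ r, M r ∈ A i r},
      blockThreshold θ M = blockThreshold θ M') :
    ((n + 1).choose θ) ^ N ≤ Fintype.card ι :=
  threshold_partition_lower_bound_general n N θ A hcover hmono
end

section
/- Fix n ≥ 2, N ≥ 1, and 1 ≤ θ ≤ n−1. Let E be the set of n × N Boolean measurement matrices all of whose columns have Hamming weight θ−1, θ, or θ+1. Then E is a multidimensional fooling set for the block delta function Π_{{θ}}^N: for any two distinct matrices M₁, M₂ ∈ E with Π_{{θ}}^N(M₁) = Π_{{θ}}^N(M₂), there exists a row index i* such that replacing row i* of one matrix by row i* of the other yields a matrix M* with Π_{{θ}}^N(M*) ≠ Π_{{θ}}^N(M₁). -/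
/-- The block delta function `Π_{{θ}}^N`: its `j`-th coordinate is `1` iff the `j`-th
column of `M` has exactly `θ` ones. -/
def blockDelta {n N : ℕ} (θ : ℕ) (M : Fin n → Fin N → Bool) : Fin N → Bool :=
  fun j => decide (colWeight M j = θ)

/- Pick a column `j` in which `M₁` and `M₂` differ. If its weight in `M₁` is `θ`, copying any
row of `M₂` that differs there moves the weight off `θ`. Otherwise both weights lie in
`{θ - 1, θ + 1}`; if `M₁`'s is `θ - 1`, then `M₂`'s is at least as large, so some row has a `0` in
`M₁` and a `1` in `M₂` at column `j`, and copying it lifts the weight to `θ` (symmetrically for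
`θ + 1`). -/

lemma colWeight_eq_sum_toNat {n N : ℕ} (M : Fin n → Fin N → Bool) (j : Fin N) :
    colWeight M j = ∑ i, (M i j).toNat := by
  simp only [colWeight, Finset.card_filter]
  exact Finset.sum_congr rfl fun i _ => by cases M i j <;> rfl

lemma colWeight_update_add_toNat {n N : ℕ} (M : Fin n → Fin N → Bool) (i : Fin n)
    (r : Fin N → Bool) (j : Fin N) :
    colWeight (Function.update M i r) j + (M i j).toNat = colWeight M j + (r j).toNat := by
  have hcol : ∀ k, (Function.update M i r k j).toNat =
      Function.update (fun k => (M k j).toNat) i (r j).toNat k :=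
    Function.apply_update (fun _ row => (row j).toNat) M i r
  simp only [colWeight_eq_sum_toNat, hcol, Finset.sum_update_of_mem (Finset.mem_univ i),
    Finset.sum_eq_sum_sdiff_singleton_add (Finset.mem_univ i) fun k => (M k j).toNat]
  ring

lemma exists_false_true_of_colWeight_le {n N : ℕ} {M M' : Fin n → Fin N → Bool} {j : Fin N}
    (hne : (fun i => M i j) ≠ fun i => M' i j) (hle : colWeight M j ≤ colWeight M' j) :
    ∃ i, M i j = false ∧ M' i j = true := by
  by_contra! h
  have hsub : (Finset.univ.filter fun i => M' i j = true) ⊆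
      Finset.univ.filter fun i => M i j = true := by
    intro i hi
    simp only [Finset.mem_filter, Finset.mem_univ, true_and] at hi ⊢
    exact Bool.not_eq_false _ |>.mp fun hM => h i hM hi
  have hfilter := Finset.eq_of_subset_of_card_le hsub hle
  exact hne (funext fun i => Bool.eq_iff_iff.mpr (by simpa using (Finset.ext_iff.mp hfilter i).symm))

lemma colWeight_update_ne {n N : ℕ} {M : Fin n → Fin N → Bool} {i : Fin n}
    {r : Fin N → Bool} {j : Fin N} (h : M i j ≠ r j) :
    colWeight (Function.update M i r) j ≠ colWeight M j := by
  have hupd := colWeight_update_add_toNat M i r j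
  revert h hupd
  cases M i j <;> cases r j <;> simp <;> omega

lemma blockDelta_ne_of_not_iff {n N θ : ℕ} {M M' : Fin n → Fin N → Bool} {j : Fin N}
    (h : ¬(colWeight M j = θ ↔ colWeight M' j = θ)) : blockDelta θ M ≠ blockDelta θ M' :=
  fun hδ => h (by simpa [blockDelta] using congrFun hδ j)

theorem delta_fooling_set_general (n N θ : ℕ)
    (M₁ M₂ : Fin n → Fin N → Bool)
    (h₁ : ∀ j, colWeight M₁ j = θ - 1 ∨ colWeight M₁ j = θ ∨ colWeight M₁ j = θ + 1)
    (h₂ : ∀ j, colWeight M₂ j = θ - 1 ∨ colWeight M₂ j = θ ∨ colWeight M₂ j = θ + 1)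
    (hne : M₁ ≠ M₂)
    (heq : blockDelta θ M₁ = blockDelta θ M₂) :
    ∃ i : Fin n,
      blockDelta θ (Function.update M₁ i (M₂ i)) ≠ blockDelta θ M₁ ∨
      blockDelta θ (Function.update M₂ i (M₁ i)) ≠ blockDelta θ M₁ := by
  obtain ⟨j, hj⟩ : ∃ j, (fun i => M₁ i j) ≠ fun i => M₂ i j := by
    by_contra! h
    exact hne (funext fun i => funext fun j => congrFun (h j) i)
  suffices ∃ i, ¬(colWeight (Function.update M₁ i (M₂ i)) j = θ ↔ colWeight M₁ j = θ) from
    this.imp fun _ hi => Or.inl (blockDelta_ne_of_not_iff hi)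
  by_cases hw₁ : colWeight M₁ j = θ
  · obtain ⟨i, hi⟩ := Function.ne_iff.mp hj
    exact ⟨i, by simpa [hw₁] using colWeight_update_ne hi⟩
  have hw₂ : colWeight M₂ j ≠ θ := fun h => hw₁ (by simpa [blockDelta, h] using congrFun heq j)
  have h₁j := h₁ j
  have h₂j := h₂ j
  rcases Nat.lt_or_gt_of_ne hw₁ with hlt | hgt
  · obtain ⟨i, hi₁, hi₂⟩ := exists_false_true_of_colWeight_le hj (by omega)
    have hupd := colWeight_update_add_toNat M₁ i (M₂ i) j
    simp only [hi₁, hi₂, Bool.toNat_false, Bool.toNat_true] at hupd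
    exact ⟨i, by omega⟩
  · obtain ⟨i, hi₂, hi₁⟩ := exists_false_true_of_colWeight_le (Ne.symm hj) (by omega)
    have hupd := colWeight_update_add_toNat M₁ i (M₂ i) j
    simp only [hi₁, hi₂, Bool.toNat_false, Bool.toNat_true] at hupd
    exact ⟨i, by omega⟩

/-- The set of measurement matrices all of whose columns have Hamming weight
`θ−1`, `θ` or `θ+1` is a multidimensional fooling set for the block delta function
`Π_{{θ}}^N`. -/
theorem delta_fooling_set (n N θ : ℕ)
    (hn : 2 ≤ n) (hN : 1 ≤ N) (hθ1 : 1 ≤ θ) (hθn : θ ≤ n - 1)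
    (M₁ M₂ : Fin n → Fin N → Bool)
    (h₁ : ∀ j, colWeight M₁ j = θ - 1 ∨ colWeight M₁ j = θ ∨ colWeight M₁ j = θ + 1)
    (h₂ : ∀ j, colWeight M₂ j = θ - 1 ∨ colWeight M₂ j = θ ∨ colWeight M₂ j = θ + 1)
    (hne : M₁ ≠ M₂)
    (heq : blockDelta θ M₁ = blockDelta θ M₂) :
    ∃ i : Fin n,
      blockDelta θ (Function.update M₁ i (M₂ i)) ≠ blockDelta θ M₁ ∨
      blockDelta θ (Function.update M₂ i (M₁ i)) ≠ blockDelta θ M₁ :=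
  delta_fooling_set_general n N θ M₁ M₂ h₁ h₂ hne heq
end

section
/- Fix n ≥ 2, N ≥ 1, and integers 1 ≤ a ≤ b ≤ n−1 with a + b ≤ n. Let E be the set of n × N Boolean measurement matrices all of whose columns have Hamming weight a−1, b, or b+1. Then E is a multidimensional fooling set for the block interval function Π_{[a,b]}^N: for any two distinct matrices M₁, M₂ ∈ E with Π_{[a,b]}^N(M₁) = Π_{[a,b]}^N(M₂), there exists a row index i* such that replacing row i* of one matrix by row i* of the other yields a matrix M* with Π_{[a,b]}^N(M*) ≠ Π_{[a,b]}^N(M₁). -/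
/-- The block interval function `Π_{[a,b]}^N`: its `j`-th coordinate is `1` iff the `j`-th
column of `M` has between `a` and `b` ones. -/
def blockInterval {n N : ℕ} (a b : ℕ) (M : Fin n → Fin N → Bool) : Fin N → Bool :=
  fun j => decide (a ≤ colWeight M j ∧ colWeight M j ≤ b)

/-!
Pick a column `j` on which `M₁` and `M₂` differ. If both columns have the same weight, or the
weight of `M₁`'s column is the smaller one, some row has a `0` in `M₁` and a `1` in `M₂`;
copying it from `M₂` raises the weight `a - 1` to `a`, or `b` to `b + 1`. If `M₁`'s column has
weight `b + 1`, the larger one, some row has a `1` in `M₁` and a `0` in `M₂`, and copying it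
lowers the weight to `b`. In each case the column crosses the boundary of `[a, b]`.
-/

open Finset

lemma exists_eq_false_and_eq_true_of_card_le {ι : Type*} [Fintype ι] {x y : ι → Bool}
    (hne : x ≠ y) (hle : #{i | x i = true} ≤ #{i | y i = true}) :
    ∃ i, x i = false ∧ y i = true := by
  by_contra! h
  have hsub : univ.filter (y · = true) ⊆ univ.filter (x · = true) :=
    monotone_filter_right _ fun i hy => by cases hx : x i <;> simp_all
  have hxy := eq_of_subset_of_card_le hsub hle
  exact hne (funext fun i => by simpa using (Finset.ext_iff.mp hxy i).symm)

section colWeight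

variable {n N : ℕ}

lemma colWeight_update_of_false_of_true {M : Fin n → Fin N → Bool} {i : Fin n}
    {r : Fin N → Bool} {j : Fin N} (hM : M i j = false) (hr : r j = true) :
    colWeight (Function.update M i r) j = colWeight M j + 1 := by
  have hset : univ.filter (Function.update M i r · j = true)
      = insert i (univ.filter (M · j = true)) := by
    ext i'
    by_cases hi : i' = i <;> simp [Function.update_apply, hi, hM, hr]
  rw [colWeight, hset, card_insert_of_notMem (by simp [hM]), colWeight]

lemma colWeight_update_of_true_of_false {M : Fin n → Fin N → Bool} {i : Fin n}
    {r : Fin N → Bool} {j : Fin N} (hM : M i j = true) (hr : r j = false) :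
    colWeight (Function.update M i r) j + 1 = colWeight M j := by
  simpa using (colWeight_update_of_false_of_true (M := Function.update M i r) (i := i) (r := M i)
    (by simpa using hr) hM).symm

lemma exists_colWeight_update_eq_succ {M₁ M₂ : Fin n → Fin N → Bool} {j : Fin N}
    (hne : (fun i => M₁ i j) ≠ fun i => M₂ i j) (hle : colWeight M₁ j ≤ colWeight M₂ j) :
    ∃ i, colWeight (Function.update M₁ i (M₂ i)) j = colWeight M₁ j + 1 := by
  obtain ⟨i, h₁, h₂⟩ := exists_eq_false_and_eq_true_of_card_le hne hle
  exact ⟨i, colWeight_update_of_false_of_true h₁ h₂⟩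

lemma exists_colWeight_update_succ_eq {M₁ M₂ : Fin n → Fin N → Bool} {j : Fin N}
    (hne : (fun i => M₁ i j) ≠ fun i => M₂ i j) (hle : colWeight M₂ j ≤ colWeight M₁ j) :
    ∃ i, colWeight (Function.update M₁ i (M₂ i)) j + 1 = colWeight M₁ j := by
  obtain ⟨i, h₂, h₁⟩ := exists_eq_false_and_eq_true_of_card_le hne.symm hle
  exact ⟨i, colWeight_update_of_true_of_false h₁ h₂⟩

end colWeight

theorem interval_fooling_set_low_general (n N a b : ℕ)
    (ha : 1 ≤ a) (hab : a ≤ b)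
    (M₁ M₂ : Fin n → Fin N → Bool)
    (h₁ : ∀ j, colWeight M₁ j = a - 1 ∨ colWeight M₁ j = b ∨ colWeight M₁ j = b + 1)
    (h₂ : ∀ j, colWeight M₂ j = a - 1 ∨ colWeight M₂ j = b ∨ colWeight M₂ j = b + 1)
    (hne : M₁ ≠ M₂)
    (heq : blockInterval a b M₁ = blockInterval a b M₂) :
    ∃ i : Fin n,
      blockInterval a b (Function.update M₁ i (M₂ i)) ≠ blockInterval a b M₁ ∨
      blockInterval a b (Function.update M₂ i (M₁ i)) ≠ blockInterval a b M₁ := by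
  obtain ⟨j, hj⟩ : ∃ j, (fun i => M₁ i j) ≠ fun i => M₂ i j := by
    by_contra! h
    exact hne (funext fun i => funext fun j => congrFun (h j) i)
  suffices ∃ i, blockInterval a b (Function.update M₁ i (M₂ i)) j ≠ blockInterval a b M₁ j by
    obtain ⟨i, hi⟩ := this
    exact ⟨i, Or.inl fun h => hi (congrFun h j)⟩
  have hbj := congrFun heq j
  simp only [blockInterval, decide_eq_decide] at hbj ⊢
  have hw₂ := h₂ j
  rcases h₁ j with hw₁ | hw₁ | hw₁
  · obtain ⟨i, hi⟩ := exists_colWeight_update_eq_succ hj (by omega)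
    exact ⟨i, by grind⟩
  · obtain ⟨i, hi⟩ := exists_colWeight_update_eq_succ hj (by omega)
    exact ⟨i, by grind⟩
  · obtain ⟨i, hi⟩ := exists_colWeight_update_succ_eq hj (by omega)
    exact ⟨i, by grind⟩

/-- For `a + b ≤ n`, the set of measurement matrices all of whose columns
have Hamming weight `a−1`, `b` or `b+1` is a multidimensional fooling set for the block
interval function `Π_{[a,b]}^N`. -/
theorem interval_fooling_set_low (n N a b : ℕ)
    (hn : 2 ≤ n) (hN : 1 ≤ N) (ha : 1 ≤ a) (hab : a ≤ b) (hb : b ≤ n - 1)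
    (hsum : a + b ≤ n)
    (M₁ M₂ : Fin n → Fin N → Bool)
    (h₁ : ∀ j, colWeight M₁ j = a - 1 ∨ colWeight M₁ j = b ∨ colWeight M₁ j = b + 1)
    (h₂ : ∀ j, colWeight M₂ j = a - 1 ∨ colWeight M₂ j = b ∨ colWeight M₂ j = b + 1)
    (hne : M₁ ≠ M₂)
    (heq : blockInterval a b M₁ = blockInterval a b M₂) :
    ∃ i : Fin n,
      blockInterval a b (Function.update M₁ i (M₂ i)) ≠ blockInterval a b M₁ ∨
      blockInterval a b (Function.update M₂ i (M₁ i)) ≠ blockInterval a b M₁ :=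
  interval_fooling_set_low_general n N a b ha hab M₁ M₂ h₁ h₂ hne heq
end

section
/- Fix n ≥ 2, N ≥ 1, and integers 1 ≤ a ≤ b ≤ n−1 with a + b ≤ n. Then any partition of the product space ({0,1}^N)^n into Π_{[a,b]}^N-monochromatic boxes has at least (C(n,a−1) + C(n,b) + C(n,b+1))^N = (C(n+1,b+1) + C(n,a−1))^N parts. -/
open Finset Function

section Fooling

variable {κ : Type*} [DecidableEq κ] {X : κ → Type*} {β : Type*}

def IsFoolingPair (f : (∀ r, X r) → β) (M M' : ∀ r, X r) : Prop :=
  f M ≠ f M' ∨ ∃ r, f (update M r (M' r)) ≠ f M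

theorem update_mem_box {A : ∀ r, Set (X r)} {M M' : ∀ r, X r}
    (hM : ∀ r, M r ∈ A r) (hM' : ∀ r, M' r ∈ A r) (r : κ) :
    ∀ r', update M r (M' r) r' ∈ A r' :=
  (forall_update_iff M fun r' x => x ∈ A r').2 ⟨hM' r, fun r' _ => hM r'⟩

theorem card_le_card_of_pairwise_isFoolingPair {ι γ : Type*} [Fintype ι] [Fintype γ]
    (f : (∀ r, X r) → β) (A : ι → ∀ r, Set (X r))
    (hcover : ⋃ i, {M : ∀ r, X r | ∀ r, M r ∈ A i r} = Set.univ)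
    (hmono : ∀ i, ∀ M ∈ {M : ∀ r, X r | ∀ r, M r ∈ A i r},
      ∀ M' ∈ {M : ∀ r, X r | ∀ r, M r ∈ A i r}, f M = f M')
    (M : γ → ∀ r, X r) (hM : Pairwise fun x y => IsFoolingPair f (M x) (M y)) :
    Fintype.card γ ≤ Fintype.card ι := by
  choose box hbox using fun x => Set.iUnion_eq_univ_iff.1 hcover (M x)
  refine Fintype.card_le_of_injective box fun x y hxy => by_contra fun hne => ?_
  have hy : ∀ r, M y r ∈ A (box x) r := hxy ▸ hbox y
  rcases hM hne with hf | ⟨r, hf⟩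
  · exact hf (hmono _ _ (hbox x) _ hy)
  · exact hf (hmono _ _ (update_mem_box (hbox x) hy r) _ (hbox x))

end Fooling

section Blockwise

variable {κ ν α β : Type*} [DecidableEq κ]

def blockwise (f : (κ → α) → β) (M : κ → ν → α) : ν → β :=
  fun j => f fun r => M r j

theorem isFoolingPair_blockwise {f : (κ → α) → β} {c c' : ν → κ → α} (j : ν)
    (h : IsFoolingPair f (c j) (c' j)) :
    IsFoolingPair (blockwise f) (fun r j => c j r) (fun r j => c' j r) := by
  rcases h with hf | ⟨r, hf⟩
  · exact Or.inl fun h => hf (congrFun h j)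
  · refine Or.inr ⟨r, fun h => hf ?_⟩
    have hcol : (fun r' => update (fun r j => c j r) r (fun j => c' j r) r' j)
        = update (c j) r (c' j r) :=
      funext (apply_update (fun _ (x : ν → α) => x j) _ r _)
    simpa [blockwise, hcol] using congrFun h j

end Blockwise

section TrueCount

variable {κ : Type*} [Fintype κ] [DecidableEq κ]

def trueCount (c : κ → Bool) : ℕ := #{i | c i = true}

theorem trueCount_update_true {c : κ → Bool} {r : κ} (h : c r = false) :
    trueCount (update c r true) = trueCount c + 1 := by
  have : univ.filter (update c r true · = true) = insert r (univ.filter (c · = true)) := by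
    ext i
    by_cases hi : i = r <;> simp [hi, update_apply]
  simp only [trueCount, this]
  exact card_insert_of_notMem (by simp [h])

theorem trueCount_update_false {c : κ → Bool} {r : κ} (h : c r = true) :
    trueCount (update c r false) + 1 = trueCount c := by
  have hc : update (update c r false) r true = c := by simp [← h]
  rw [← trueCount_update_true (update_self r false c), hc]

def boolFunEquivFinset : (κ → Bool) ≃ Finset κ where
  toFun c := {i | c i = true}
  invFun s i := decide (i ∈ s)
  left_inv c := by ext; simp
  right_inv s := by ext; simp

theorem exists_false_true_of_trueCount_le {c c' : κ → Bool} (hle : trueCount c ≤ trueCount c')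
    (hne : c ≠ c') : ∃ r, c r = false ∧ c' r = true := by
  by_contra! h
  have hsub : boolFunEquivFinset c' ⊆ boolFunEquivFinset c := fun i => by
    simpa [boolFunEquivFinset] using fun hi => by_contra fun hci => h i (by simpa using hci) hi
  exact hne (boolFunEquivFinset.injective (eq_of_subset_of_card_le hsub hle).symm)

theorem card_trueCount_eq (w : ℕ) :
    Fintype.card {c : κ → Bool // trueCount c = w} = (Fintype.card κ).choose w := by
  rw [← Fintype.card_finset_len]
  exact Fintype.card_congr (boolFunEquivFinset.subtypeEquiv fun _ => Iff.rfl)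

theorem card_trueCount_mem (s : Finset ℕ) :
    Fintype.card {c : κ → Bool // trueCount c ∈ s} = ∑ w ∈ s, (Fintype.card κ).choose w := by
  rw [Fintype.card_subtype,
    card_eq_sum_card_fiberwise (f := trueCount) (t := s) (by simp [Set.MapsTo])]
  refine sum_congr rfl fun w hw => ?_
  rw [← card_trueCount_eq, Fintype.card_subtype, filter_filter]
  congr 1
  exact filter_congr fun c _ => ⟨And.right, fun h => ⟨h ▸ hw, h⟩⟩

def intervalFun (a b : ℕ) (c : κ → Bool) : Bool := decide (a ≤ trueCount c ∧ trueCount c ≤ b)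

theorem isFoolingPair_intervalFun {a b : ℕ} (ha : 1 ≤ a) (hab : a ≤ b) {c c' : κ → Bool}
    (hc : trueCount c ∈ ({a - 1, b, b + 1} : Finset ℕ))
    (hc' : trueCount c' ∈ ({a - 1, b, b + 1} : Finset ℕ)) (hne : c ≠ c') :
    IsFoolingPair (intervalFun a b) c c' := by
  simp only [mem_insert, mem_singleton] at hc hc'
  by_cases htop : trueCount c = b + 1
  · obtain ⟨r, hr', hr⟩ := exists_false_true_of_trueCount_le (by omega) hne.symm
    have hw := trueCount_update_false hr
    refine Or.inr ⟨r, ?_⟩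
    simp only [intervalFun, hr', ne_eq, decide_eq_decide]
    omega
  by_cases hle : trueCount c ≤ trueCount c'
  · obtain ⟨r, hr, hr'⟩ := exists_false_true_of_trueCount_le hle hne
    have hw := trueCount_update_true hr
    refine Or.inr ⟨r, ?_⟩
    simp only [intervalFun, hr', ne_eq, decide_eq_decide]
    omega
  · refine Or.inl ?_
    simp only [intervalFun, ne_eq, decide_eq_decide]
    omega

end TrueCount

theorem blockInterval_eq_blockwise {n N : ℕ} (a b : ℕ) :
    blockInterval (n := n) (N := N) a b = blockwise (intervalFun a b) :=
  rfl

theorem interval_partition_lower_bound_low_general (n N a b : ℕ)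
    (ha : 1 ≤ a) (hab : a ≤ b)
    {ι : Type*} [Fintype ι]
    (A : ι → Fin n → Set (Fin N → Bool))
    (hcover : ⋃ i, {M : Fin n → Fin N → Bool | ∀ r, M r ∈ A i r} = Set.univ)
    (hmono : ∀ i, ∀ M ∈ {M : Fin n → Fin N → Bool | ∀ r, M r ∈ A i r},
                  ∀ M' ∈ {M : Fin n → Fin N → Bool | ∀ r, M r ∈ A i r},
      blockInterval a b M = blockInterval a b M') :
    (n.choose (a - 1) + n.choose b + n.choose (b + 1)) ^ N ≤ Fintype.card ι ∧
    (n.choose (a - 1) + n.choose b + n.choose (b + 1)) ^ N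
      = ((n + 1).choose (b + 1) + n.choose (a - 1)) ^ N := by
  refine ⟨?_, by rw [Nat.choose_succ_succ]; ring⟩
  let G := {c : Fin n → Bool // trueCount c ∈ ({a - 1, b, b + 1} : Finset ℕ)}
  have hcardG : Fintype.card G = n.choose (a - 1) + n.choose b + n.choose (b + 1) := by
    rw [card_trueCount_mem, Fintype.card_fin, sum_insert (by simp; omega),
      sum_pair (by omega), add_assoc]
  have hfool : Pairwise fun g g' : Fin N → G => IsFoolingPair (blockwise (intervalFun a b))
      (fun r j => (g j).1 r) (fun r j => (g' j).1 r) := by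
    intro g g' hne
    obtain ⟨j, hj⟩ := ne_iff.1 hne
    exact isFoolingPair_blockwise j
      (isFoolingPair_intervalFun ha hab (g j).2 (g' j).2 (Subtype.coe_ne_coe.2 hj))
  rw [blockInterval_eq_blockwise] at hmono
  have := card_le_card_of_pairwise_isFoolingPair _ A hcover hmono _ hfool
  rwa [Fintype.card_fun, hcardG, Fintype.card_fin] at this

/-- For `a + b ≤ n`, any partition of `({0,1}^N)^n` into
`Π_{[a,b]}^N`-monochromatic boxes has at least
`(C(n,a−1) + C(n,b) + C(n,b+1))^N = (C(n+1,b+1) + C(n,a−1))^N` parts. -/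
theorem interval_partition_lower_bound_low (n N a b : ℕ)
    (hn : 2 ≤ n) (hN : 1 ≤ N) (ha : 1 ≤ a) (hab : a ≤ b) (hb : b ≤ n - 1)
    (hsum : a + b ≤ n)
    {ι : Type*} [Fintype ι]
    (A : ι → Fin n → Set (Fin N → Bool))
    (hdisj : ∀ i j, i ≠ j →
      Disjoint {M : Fin n → Fin N → Bool | ∀ r, M r ∈ A i r}
               {M : Fin n → Fin N → Bool | ∀ r, M r ∈ A j r})
    (hcover : ⋃ i, {M : Fin n → Fin N → Bool | ∀ r, M r ∈ A i r} = Set.univ)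
    (hmono : ∀ i, ∀ M ∈ {M : Fin n → Fin N → Bool | ∀ r, M r ∈ A i r},
                  ∀ M' ∈ {M : Fin n → Fin N → Bool | ∀ r, M r ∈ A i r},
      blockInterval a b M = blockInterval a b M') :
    (n.choose (a - 1) + n.choose b + n.choose (b + 1)) ^ N ≤ Fintype.card ι ∧
    (n.choose (a - 1) + n.choose b + n.choose (b + 1)) ^ N
      = ((n + 1).choose (b + 1) + n.choose (a - 1)) ^ N :=
  interval_partition_lower_bound_low_general n N a b ha hab A hcover hmono
end

section
/- Fix n ≥ 2, N ≥ 1, and integers 1 ≤ a ≤ b ≤ n−1 with a + b ≥ n. Then any partition of the product space ({0,1}^N)^n into Π_{[a,b]}^N-monochromatic boxes has at least (C(n,a−1) + C(n,a) + C(n,b+1))^N = (C(n+1,a) + C(n,b+1))^N parts. -/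
def wt {n : ℕ} (x : Fin n → Bool) : ℕ := (Finset.univ.filter fun i => x i = true).card

def supp {n : ℕ} (x : Fin n → Bool) : Finset (Fin n) := Finset.univ.filter fun i => x i = true

lemma wt_eq_card_supp {n : ℕ} (x : Fin n → Bool) : wt x = (supp x).card := rfl

lemma hyb_exists {n : ℕ} (x y : Fin n → Bool) (m : ℕ)
    (h1 : (supp x ∩ supp y).card ≤ m) (h2 : m ≤ (supp x ∪ supp y).card) :
    ∃ T : Fin n → Bool, wt (fun i => if T i = true then x i else y i) = m := by
  obtain ⟨Z, hZ1, hZ2, hZc⟩ :=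
    Finset.exists_subsuperset_card_eq (Finset.inter_subset_union) h1 h2
  refine ⟨fun i => x i == decide (i ∈ Z), ?_⟩
  rw [wt, ← hZc]
  congr 1
  ext i
  have h3 : i ∈ supp x ∩ supp y → i ∈ Z := fun h => hZ1 h
  have h4 : i ∈ Z → i ∈ supp x ∪ supp y := fun h => hZ2 h
  simp only [supp, Finset.mem_inter, Finset.mem_union, Finset.mem_filter, Finset.mem_univ,
    true_and] at h3 h4
  by_cases hz : i ∈ Z <;> cases hx : x i <;> cases hy : y i <;> simp_all

lemma fooling {n : ℕ} (a b : ℕ) (ha : 1 ≤ a) (hab : a ≤ b)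
    (x y : Fin n → Bool) (hxy : x ≠ y)
    (hx : wt x = a - 1 ∨ wt x = a ∨ wt x = b + 1)
    (hy : wt y = a - 1 ∨ wt y = a ∨ wt y = b + 1) :
    ∃ T : Fin n → Bool,
      ((a ≤ wt (fun i => if T i = true then x i else y i) ∧
        wt (fun i => if T i = true then x i else y i) ≤ b) ↔ ¬(a ≤ wt x ∧ wt x ≤ b)) := by
  set I := (supp x ∩ supp y).card with hIdef
  set U := (supp x ∪ supp y).card with hUdef
  have hIU : I + U = wt x + wt y := Finset.card_inter_add_card_union _ _
  have hIx : I ≤ wt x := Finset.card_le_card Finset.inter_subset_left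
  have hIy : I ≤ wt y := Finset.card_le_card Finset.inter_subset_right
  have hxU : wt x ≤ U := Finset.card_le_card Finset.subset_union_left
  have hyU : wt y ≤ U := Finset.card_le_card Finset.subset_union_right
  have hIltU : I < U := by
    obtain ⟨i, hi⟩ := Function.ne_iff.mp hxy
    apply Finset.card_lt_card
    rw [Finset.ssubset_iff_of_subset Finset.inter_subset_union]
    refine ⟨i, ?_, ?_⟩ <;>
      · simp only [supp, Finset.mem_union, Finset.mem_inter, Finset.mem_filter,
          Finset.mem_univ, true_and]
        cases hxi : x i <;> cases hyi : y i <;> simp_all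
  have key : ∃ m, I ≤ m ∧ m ≤ U ∧ ((a ≤ m ∧ m ≤ b) ↔ ¬(a ≤ wt x ∧ wt x ≤ b)) := by
    by_cases hvx : a ≤ wt x ∧ wt x ≤ b
    · by_cases hvy : a ≤ wt y ∧ wt y ≤ b
      · exact ⟨I, le_refl _, le_of_lt hIltU, by omega⟩
      · exact ⟨wt y, hIy, hyU, by omega⟩
    · exact ⟨max a (min b U), by omega, by omega, by omega⟩
  obtain ⟨m, hm1, hm2, hm3⟩ := key
  obtain ⟨T, hT⟩ := hyb_exists x y m hm1 hm2
  exact ⟨T, by rw [hT]; exact hm3⟩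

lemma card_wt_eq {n : ℕ} (k : ℕ) :
    (Finset.univ.filter fun x : Fin n → Bool => wt x = k).card = n.choose k := by
  have : (Finset.univ.filter fun x : Fin n → Bool => wt x = k).card
      = (Finset.univ.powersetCard k : Finset (Finset (Fin n))).card := by
    apply Finset.card_bij (fun x _ => supp x)
    · intro x hx
      rw [Finset.mem_powersetCard]
      exact ⟨Finset.subset_univ _, (Finset.mem_filter.mp hx).2⟩
    · intro x hx y hy hsupp
      funext i
      have := congrArg (fun s => i ∈ s) hsupp
      simp only [supp, Finset.mem_filter, Finset.mem_univ, true_and, eq_iff_iff] at this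
      cases hxi : x i <;> cases hyi : y i <;> simp_all
    · intro s hs
      rw [Finset.mem_powersetCard] at hs
      refine ⟨fun i => decide (i ∈ s), ?_, ?_⟩
      · rw [Finset.mem_filter]
        refine ⟨Finset.mem_univ _, ?_⟩
        rw [wt]
        rw [← hs.2]
        congr 1
        ext i; simp
      · ext i; simp [supp]
  rw [this, Finset.card_powersetCard, Finset.card_univ, Fintype.card_fin]

lemma card_three {n a b : ℕ} (ha : 1 ≤ a) (hab : a ≤ b) :
    (Finset.univ.filter fun x : Fin n → Bool =>
        wt x = a - 1 ∨ wt x = a ∨ wt x = b + 1).card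
      = n.choose (a - 1) + n.choose a + n.choose (b + 1) := by
  rw [Finset.filter_or, Finset.filter_or]
  rw [Finset.card_union_of_disjoint, Finset.card_union_of_disjoint, card_wt_eq, card_wt_eq,
    card_wt_eq]
  · ring
  · rw [Finset.disjoint_left]
    intro x h1 h2
    simp only [Finset.mem_filter] at h1 h2
    omega
  · rw [Finset.disjoint_left]
    intro x h1 h2
    simp only [Finset.mem_filter, Finset.mem_union] at h1 h2
    omega

/-- For `a + b ≥ n`, any partition of `({0,1}^N)^n` into
`Π_{[a,b]}^N`-monochromatic boxes has at least
`(C(n,a−1) + C(n,a) + C(n,b+1))^N = (C(n+1,a) + C(n,b+1))^N` parts. -/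
theorem interval_partition_lower_bound_high (n N a b : ℕ)
    (hn : 2 ≤ n) (hN : 1 ≤ N) (ha : 1 ≤ a) (hab : a ≤ b) (hb : b ≤ n - 1)
    (hsum : n ≤ a + b)
    {ι : Type*} [Fintype ι]
    (A : ι → Fin n → Set (Fin N → Bool))
    (hdisj : ∀ i j, i ≠ j →
      Disjoint {M : Fin n → Fin N → Bool | ∀ r, M r ∈ A i r}
               {M : Fin n → Fin N → Bool | ∀ r, M r ∈ A j r})
    (hcover : ⋃ i, {M : Fin n → Fin N → Bool | ∀ r, M r ∈ A i r} = Set.univ)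
    (hmono : ∀ i, ∀ M ∈ {M : Fin n → Fin N → Bool | ∀ r, M r ∈ A i r},
                  ∀ M' ∈ {M : Fin n → Fin N → Bool | ∀ r, M r ∈ A i r},
      blockInterval a b M = blockInterval a b M') :
    (n.choose (a - 1) + n.choose a + n.choose (b + 1)) ^ N ≤ Fintype.card ι ∧
    (n.choose (a - 1) + n.choose a + n.choose (b + 1)) ^ N
      = ((n + 1).choose a + n.choose (b + 1)) ^ N := by
  classical
  have hpascal : n.choose (a - 1) + n.choose a = (n + 1).choose a := by
    obtain ⟨a', rfl⟩ : ∃ a', a = a' + 1 := ⟨a - 1, by omega⟩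
    simp [Nat.choose_succ_succ]
  refine ⟨?_, by rw [← hpascal]⟩
  set P : (Fin n → Bool) → Prop := fun x => wt x = a - 1 ∨ wt x = a ∨ wt x = b + 1 with hP
  set F : Finset (Fin n → Fin N → Bool) :=
    Finset.univ.filter (fun M => ∀ j, P (fun i => M i j)) with hF
  -- cardinality of F
  have e : {M : Fin n → Fin N → Bool // ∀ j, P (fun i => M i j)}
      ≃ (Fin N → {x : Fin n → Bool // P x}) :=
    { toFun := fun M j => ⟨fun i => M.1 i j, M.2 j⟩
      invFun := fun f => ⟨fun i j => (f j).1 i, fun j => (f j).2⟩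
      left_inv := fun M => rfl
      right_inv := fun f => rfl }
  have hcardF : F.card = (n.choose (a - 1) + n.choose a + n.choose (b + 1)) ^ N := by
    rw [hF, ← Fintype.card_subtype, Fintype.card_congr e, Fintype.card_fun,
      Fintype.card_subtype, Fintype.card_fin]
    rw [card_three ha hab]
  -- the covering index map
  have hc : ∀ M : Fin n → Fin N → Bool, ∃ i, ∀ r, M r ∈ A i r := by
    intro M
    have hM : M ∈ ⋃ i, {M : Fin n → Fin N → Bool | ∀ r, M r ∈ A i r} := by
      rw [hcover]; trivial
    simpa using hM
  choose g hg using hc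
  -- injectivity on F
  have hinj : Set.InjOn g F := by
    intro M hM M' hM' heq
    by_contra hne
    obtain ⟨i0, hi0⟩ := Function.ne_iff.mp hne
    obtain ⟨j, hj⟩ := Function.ne_iff.mp hi0
    set x : Fin n → Bool := fun i => M i j with hxdef
    set y : Fin n → Bool := fun i => M' i j with hydef
    have hxy : x ≠ y := Function.ne_iff.mpr ⟨i0, hj⟩
    have hPx : P x := (Finset.mem_filter.mp hM).2 j
    have hPy : P y := (Finset.mem_filter.mp hM').2 j
    obtain ⟨T, hT⟩ := fooling a b ha hab x y hxy hPx hPy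
    set H : Fin n → Fin N → Bool := fun r => if T r = true then M r else M' r with hHdef
    have hHbox : ∀ r, H r ∈ A (g M) r := by
      intro r
      by_cases h : T r = true
      · simp only [hHdef, h, if_true]; exact hg M r
      · have hHr : H r = M' r := by simp [hHdef, h]
        rw [hHr, heq]; exact hg M' r
    have hval : blockInterval a b H = blockInterval a b M :=
      hmono (g M) H hHbox M (hg M)
    have hcol : colWeight H j = wt (fun i => if T i = true then x i else y i) := by
      rw [colWeight, wt]
      congr 1
      apply Finset.filter_congr
      intro i _
      by_cases h : T i = true <;> simp [hHdef, h, hxdef, hydef]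
    have hcolM : colWeight M j = wt x := rfl
    have hvj := congrFun hval j
    rw [blockInterval, blockInterval] at hvj
    simp only [hcol, hcolM, decide_eq_decide] at hvj
    rw [hvj] at hT
    exact iff_not_self hT
  calc (n.choose (a - 1) + n.choose a + n.choose (b + 1)) ^ N
      = F.card := hcardF.symm
    _ ≤ (Finset.univ : Finset ι).card := Finset.card_le_card_of_injOn g
        (fun M _ => Finset.mem_univ _) hinj
    _ = Fintype.card ι := Finset.card_univ
end

section
/- Let n, a, b be integers with 2 ≤ a ≤ b ≤ n−1 and a + b = n. Then C(n,b) + (b−a+1)·C(n−1,a−2) + C(n,a) + (b−a+1)·C(n−1,b+1) ≤ C(n+1,a) + (b−a+1)·C(n,b+1). -/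
lemma key_step (c d : ℕ) :
    (2*c+3+d).choose (c+2) + d * (2*c+3+d).choose c
      ≤ (d+1) * (2*c+3+d).choose (c+1) := by
  set m := 2*c+3+d with hm
  set X := m.choose c
  set Y := m.choose (c+1) with hY'
  set Z := m.choose (c+2)
  have h1 : Z * (c+2) = Y * (c+2+d) := by
    have := Nat.choose_succ_right_eq m (c+1)
    simpa [show m - (c+1) = c+2+d by omega] using this
  have h2 : Y * (c+1) = X * (c+3+d) := by
    have := Nat.choose_succ_right_eq m c
    simpa [show m - c = c+3+d by omega] using this
  have hY : 0 < (c+1)*(c+2)*(c+3+d) := by positivity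
  apply Nat.le_of_mul_le_mul_right _ hY
  have hZ : Z * ((c+1)*(c+2)*(c+3+d)) = Y * ((c+2+d)*(c+1)*(c+3+d)) := by
    calc Z * ((c+1)*(c+2)*(c+3+d)) = (Z*(c+2)) * ((c+1)*(c+3+d)) := by ring
    _ = (Y*(c+2+d)) * ((c+1)*(c+3+d)) := by rw [h1]
    _ = Y * ((c+2+d)*(c+1)*(c+3+d)) := by ring
  have hX : d * X * ((c+1)*(c+2)*(c+3+d)) = Y * (d*(c+1)*(c+1)*(c+2)) := by
    calc d * X * ((c+1)*(c+2)*(c+3+d)) = (X*(c+3+d)) * (d*(c+1)*(c+2)) := by ring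
    _ = (Y*(c+1)) * (d*(c+1)*(c+2)) := by rw [← h2]
    _ = Y * (d*(c+1)*(c+1)*(c+2)) := by ring
  have expand : (Z + d * X) * ((c+1)*(c+2)*(c+3+d))
      = Y * ((c+2+d)*(c+1)*(c+3+d) + d*(c+1)*(c+1)*(c+2)) := by
    rw [add_mul, hZ, hX, ← mul_add]
  rw [expand]
  have coeff : (c+2+d)*(c+1)*(c+3+d) + d*(c+1)*(c+1)*(c+2) + (c+1)*(c+1)*d*(d+1)
      = (d+1) * ((c+1)*(c+2)*(c+3+d)) := by ring
  calc Y * ((c+2+d)*(c+1)*(c+3+d) + d*(c+1)*(c+1)*(c+2))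
      ≤ Y * ((d+1) * ((c+1)*(c+2)*(c+3+d))) := by
        apply Nat.mul_le_mul_left
        omega
    _ = (d+1) * Y * ((c+1)*(c+2)*(c+3+d)) := by ring

/-- The induction step (case `a + b = n`) for the upper bound on the
complexity of Boolean interval functions:
`C(n,b) + (b−a+1)·C(n−1,a−2) + C(n,a) + (b−a+1)·C(n−1,b+1) ≤ C(n+1,a) + (b−a+1)·C(n,b+1)`. -/
theorem interval_recursion_step (n a b : ℕ)
    (ha : 2 ≤ a) (hab : a ≤ b) (hb : b ≤ n - 1) (hsum : a + b = n) :
    n.choose b + (b - a + 1) * (n - 1).choose (a - 2)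
      + n.choose a + (b - a + 1) * (n - 1).choose (b + 1)
    ≤ (n + 1).choose a + (b - a + 1) * n.choose (b + 1) := by
  obtain ⟨c, rfl⟩ : ∃ c, a = c + 2 := ⟨a - 2, by omega⟩
  obtain ⟨d, rfl⟩ : ∃ d, b = c + 2 + d := ⟨b - (c + 2), by omega⟩
  obtain rfl : n = 2*c + 4 + d := by omega
  simp only [show 2*c+4+d - 1 = 2*c+3+d from by omega,
    show c+2+d - (c+2) = d from by omega,
    show c+2-2 = c from by omega,
    show c+2+d+1 = c+3+d from by omega]
  have hs1 : (2*c+4+d).choose (c+2+d) = (2*c+4+d).choose (c+2) := by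
    rw [← Nat.choose_symm (show c+2 ≤ 2*c+4+d by omega)]
    congr 1; omega
  have hs2 : (2*c+3+d).choose (c+2+d) = (2*c+3+d).choose (c+1) := by
    rw [← Nat.choose_symm (show c+1 ≤ 2*c+3+d by omega)]
    congr 1; omega
  have hp1 : (2*c+4+d+1).choose (c+2) = (2*c+4+d).choose (c+1) + (2*c+4+d).choose (c+2) :=
    Nat.choose_succ_succ _ _
  have hp2 : (2*c+4+d).choose (c+3+d)
      = (2*c+3+d).choose (c+2+d) + (2*c+3+d).choose (c+3+d) := by
    have := Nat.choose_succ_succ (2*c+3+d) (c+2+d)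
    simpa [show 2*c+3+d+1 = 2*c+4+d from by omega,
      show c+2+d+1 = c+3+d from by omega] using this
  have hp3 : (2*c+4+d).choose (c+2) = (2*c+3+d).choose (c+1) + (2*c+3+d).choose (c+2) := by
    have := Nat.choose_succ_succ (2*c+3+d) (c+1)
    simpa [show 2*c+3+d+1 = 2*c+4+d from by omega] using this
  have hp4 : (2*c+4+d).choose (c+1) = (2*c+3+d).choose c + (2*c+3+d).choose (c+1) := by
    have := Nat.choose_succ_succ (2*c+3+d) c
    simpa [show 2*c+3+d+1 = 2*c+4+d from by omega] using this
  have key := key_step c d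
  rw [hs1, hp1, hp2, hs2, hp3, hp4]
  have e1 : ∀ x : ℕ, (d+1)*x = d*x + x := fun x => by ring
  simp only [mul_add, e1] at key ⊢
  omega
end

section
/- Let α, β be real numbers with 0 < α < β and α + β < 1. Then (β−α)·n·C(n, ⌊αn⌋−1) = o(C(n+1, ⌊βn⌋+1)) as n → ∞; that is, the ratio ((β−α)·n·C(n, ⌊αn⌋−1)) / C(n+1, ⌊βn⌋+1), viewed as a real number, tends to 0 as n → ∞. -/
/-!
Pick `α < γ < min β (1 - β)`. Since `γ < 1 / 2`, the ratio `C(n, j + 1) / C(n, j) = (n - j) / (j + 1)`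
stays above a fixed `c > 1` for `j < γ n`, so climbing from `⌊α n⌋ - 1` to `⌊γ n⌋` gains a factor
`c ^ ⌊(γ - α) n⌋`; unimodality of the row `n + 1` then carries `C(n + 1, ⌊γ n⌋)` up to
`C(n + 1, ⌊β n⌋ + 1)`, because `γ + β ≤ 1`. The ratio is therefore `O(n / c ^ ⌊(γ - α) n⌋) → 0`.
-/

open Filter Topology

namespace Nat

theorem floor_add_floor_le {R : Type*} [Semiring R] [LinearOrder R] [IsStrictOrderedRing R]
    [FloorSemiring R] {a b : R} (ha : 0 ≤ a) (hb : 0 ≤ b) : ⌊a⌋₊ + ⌊b⌋₊ ≤ ⌊a + b⌋₊ :=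
  le_floor <| by rw [cast_add]; exact _root_.add_le_add (floor_le ha) (floor_le hb)

theorem choose_le_choose_of_le_of_le_half {n a b : ℕ} (hab : a ≤ b) (hb : b ≤ n / 2) :
    n.choose a ≤ n.choose b := by
  induction b, hab using Nat.le_induction with
  | base => rfl
  | succ b _ ih => exact (ih (by omega)).trans (choose_le_succ_of_lt_half_left (by omega))

theorem choose_le_choose_of_le_of_add_le {n a b : ℕ} (hab : a ≤ b) (h : a + b ≤ n) :
    n.choose a ≤ n.choose b := by
  rcases le_or_gt b (n / 2) with hb | hb
  · exact choose_le_choose_of_le_of_le_half hab hb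
  · rw [← choose_symm (by omega : b ≤ n)]
    exact choose_le_choose_of_le_of_le_half (by omega) (by omega)

theorem mul_choose_le_choose_succ {c : ℝ} {n j : ℕ} (h : c * (j + 1) ≤ n - j) :
    c * n.choose j ≤ n.choose (j + 1) := by
  rcases le_or_gt j n with hj | hj
  · have hrec : (n.choose (j + 1) : ℝ) * (j + 1) = n.choose j * (n - j) := by
      rw [← Nat.cast_sub hj]; exact_mod_cast choose_succ_right_eq n j
    refine le_of_mul_le_mul_right ?_ (by positivity : (0 : ℝ) < j + 1)
    rw [hrec, mul_right_comm, mul_comm (n.choose j : ℝ)]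
    exact mul_le_mul_of_nonneg_right h (Nat.cast_nonneg _)
  · simp [choose_eq_zero_of_lt hj]

theorem pow_mul_choose_le_choose_add {c : ℝ} (hc : 0 ≤ c) {n k s : ℕ}
    (h : c * (k + s) ≤ n + 1 - (k + s)) : c ^ s * n.choose k ≤ n.choose (k + s) := by
  induction s with
  | zero => simp
  | succ s ih =>
    push_cast at h
    rw [← add_assoc]
    calc c ^ (s + 1) * n.choose k = c * (c ^ s * n.choose k) := by ring
      _ ≤ c * n.choose (k + s) := mul_le_mul_of_nonneg_left (ih (by nlinarith)) hc
      _ ≤ n.choose (k + s + 1) := mul_choose_le_choose_succ (by push_cast; linarith)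

theorem pow_sub_mul_choose_le_succ_choose {c : ℝ} (hc : 0 ≤ c) {n k t m : ℕ} (hkt : k ≤ t)
    (htm : t ≤ m) (hsum : t + m ≤ n + 1) (hgrowth : c * t ≤ n + 1 - t) :
    c ^ (t - k) * n.choose k ≤ (n + 1).choose m := by
  obtain ⟨s, rfl⟩ := Nat.exists_eq_add_of_le hkt
  calc c ^ (k + s - k) * n.choose k = c ^ s * n.choose k := by rw [Nat.add_sub_cancel_left]
    _ ≤ n.choose (k + s) := pow_mul_choose_le_choose_add hc (by exact_mod_cast hgrowth)
    _ ≤ (n + 1).choose (k + s) := by exact_mod_cast choose_le_succ n (k + s)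
    _ ≤ (n + 1).choose m := by exact_mod_cast choose_le_choose_of_le_of_add_le htm hsum

end Nat

theorem pow_floor_mul_choose_le_choose {α β γ c : ℝ} (hα : 0 ≤ α) (hαγ : α ≤ γ) (hγβ : γ ≤ β)
    (hγβ1 : γ + β ≤ 1) (hc : 1 ≤ c) (hcγ : c * γ ≤ 1 - γ) (n : ℕ) :
    c ^ ⌊(γ - α) * n⌋₊ * n.choose (⌊α * n⌋₊ - 1) ≤ (n + 1).choose (⌊β * n⌋₊ + 1) := by
  have hn : (0 : ℝ) ≤ n := n.cast_nonneg
  have hγ : 0 ≤ γ := hα.trans hαγ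
  have hαγn : ⌊(γ - α) * n⌋₊ + ⌊α * n⌋₊ ≤ ⌊γ * n⌋₊ := by
    simpa [sub_mul] using
      Nat.floor_add_floor_le (by nlinarith : 0 ≤ (γ - α) * n) (by positivity : 0 ≤ α * n)
  have hγβn : ⌊γ * n⌋₊ + ⌊β * n⌋₊ ≤ n := by
    refine (Nat.floor_add_floor_le (by positivity) (by nlinarith)).trans (Nat.floor_le_of_le ?_)
    nlinarith
  have hγn : (⌊γ * n⌋₊ : ℝ) ≤ γ * n := Nat.floor_le (by positivity)
  have hgrowth : c * ⌊γ * n⌋₊ ≤ n + 1 - ⌊γ * n⌋₊ := by nlinarith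
  calc c ^ ⌊(γ - α) * n⌋₊ * n.choose (⌊α * n⌋₊ - 1)
      ≤ c ^ (⌊γ * n⌋₊ - (⌊α * n⌋₊ - 1)) * n.choose (⌊α * n⌋₊ - 1) := by
        gcongr
        omega
    _ ≤ (n + 1).choose (⌊β * n⌋₊ + 1) :=
        Nat.pow_sub_mul_choose_le_succ_choose (by linarith) (by omega)
          (by linarith [Nat.floor_mono (mul_le_mul_of_nonneg_right hγβ hn)]) (by omega) hgrowth

theorem tendsto_natCast_div_pow_floor_mul {c ε : ℝ} (hc : 1 < c) (hε : 0 < ε) :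
    Tendsto (fun n : ℕ => (n : ℝ) / c ^ ⌊ε * n⌋₊) atTop (𝓝 0) := by
  have hc0 : 0 < c := by linarith
  set r := (c ^ ε)⁻¹
  have hr : r < 1 := inv_lt_one_of_one_lt₀ (Real.one_lt_rpow hc hε)
  have hbound (n : ℕ) : (n : ℝ) / c ^ ⌊ε * n⌋₊ ≤ c * (n * r ^ n) := by
    have hpow : (c ^ ε) ^ n ≤ c * c ^ ⌊ε * n⌋₊ := by
      rw [← Real.rpow_natCast, ← Real.rpow_mul hc0.le, ← pow_succ', ← Real.rpow_natCast]
      exact Real.rpow_le_rpow_of_exponent_le hc.le (by push_cast; exact (Nat.lt_floor_add_one _).le)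
    calc (n : ℝ) / c ^ ⌊ε * n⌋₊ = c * n / (c * c ^ ⌊ε * n⌋₊) := by
          rw [mul_div_mul_left _ _ hc0.ne']
      _ ≤ c * n / (c ^ ε) ^ n := div_le_div_of_nonneg_left (by positivity) (by positivity) hpow
      _ = c * (n * r ^ n) := by rw [inv_pow, div_eq_mul_inv, mul_assoc]
  have hlim := (tendsto_self_mul_const_pow_of_lt_one (by positivity) hr).const_mul c
  rw [mul_zero] at hlim
  exact squeeze_zero (fun n => by positivity) hbound hlim

/-- For `0 < α < β` with `α + β < 1`, we have
`(β−α)·n·C(n,⌊αn⌋−1) = o(C(n+1,⌊βn⌋+1))` as `n → ∞`: the ratio tends to `0`. -/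
theorem percentile_residual_term_negligible (α β : ℝ)
    (hα : 0 < α) (hαβ : α < β) (hsum : α + β < 1) :
    Tendsto (fun n : ℕ =>
        ((β - α) * n * (n.choose (⌊α * n⌋₊ - 1) : ℝ))
          / ((n + 1).choose (⌊β * n⌋₊ + 1) : ℝ))
      atTop (nhds 0) := by
  obtain ⟨γ, hαγ, hγ⟩ := exists_between (lt_min hαβ (by linarith : α < 1 - β))
  obtain ⟨hγβ, hγβ1⟩ := lt_min_iff.1 hγ
  have hγ0 : 0 < γ := hα.trans hαγ
  obtain ⟨c, hc1, hcγ⟩ := exists_between ((one_lt_div hγ0).2 (by linarith : γ < 1 - γ))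
  have hcγ' : c * γ ≤ 1 - γ := ((lt_div_iff₀ hγ0).1 hcγ).le
  have hβα : 0 ≤ β - α := sub_nonneg.2 hαβ.le
  have hbound (n : ℕ) : (β - α) * n * (n.choose (⌊α * n⌋₊ - 1) : ℝ)
      / ((n + 1).choose (⌊β * n⌋₊ + 1) : ℝ) ≤ (β - α) * (n / c ^ ⌊(γ - α) * n⌋₊) := by
    refine div_le_of_le_mul₀ (Nat.cast_nonneg _) (mul_nonneg hβα (by positivity)) ?_
    calc (β - α) * n * (n.choose (⌊α * n⌋₊ - 1) : ℝ)
        = (β - α) * (n / c ^ ⌊(γ - α) * n⌋₊)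
          * (c ^ ⌊(γ - α) * n⌋₊ * n.choose (⌊α * n⌋₊ - 1)) := by
          field_simp
      _ ≤ _ := by
        gcongr
        exact pow_floor_mul_choose_le_choose hα.le hαγ.le hγβ.le (by linarith) hc1.le hcγ' n
  have hlim := (tendsto_natCast_div_pow_floor_mul hc1 (sub_pos.2 hαγ)).const_mul (β - α)
  rw [mul_zero] at hlim
  exact squeeze_zero (fun n => by positivity) hbound hlim
end
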